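/- Let β>0, ξ>0, μ>0, γ>0, ρ>0, κ>0, ν>0, α>1, ω>1 with α+ω = αω. Let W* > 0 be a root of the quadratic f(w) = A w² + B w + C (with A, B, C as in the equilibrium quadratic of the SIRWJS system), and define S* = (γ+μ)/β - νξ(γ+μ)W*/(ρ+μ), I* = μ(1/(γ+μ) - 1/β) + (ωκ/(γ+μ) + μνξ/(ρ+μ))W*, J* = νβI*W*/(ρ+μ - νβξW*). Then (S*,I*,W*,J*) is a solution of the equilibrium equations with all components positive (and hence lies in D = {(s,i,w,j) ∈ ℝ≥0⁴ : s+i+w+j ≤ 1}) if and only if max{0, W̲} < W* < W̄, where W̄ = (ρ+μ)/(νβξ) and W̲ = μ(-β+γ+μ)(ρ+μ)/(β(μνξ(γ+μ) + ωκ(ρ+μ))). -/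

import Mathlib

/-!
Put `D = ρ + μ - νβξW = νβξ (W̄ - W)`. Clearing denominators, `β(ρ+μ) S = (γ+μ) D` and
`β(γ+μ)(ρ+μ) I = β(μνξ(γ+μ) + ωκ(ρ+μ)) (W - W̲)`, so `S > 0 ↔ W < W̄` and `I > 0 ↔ W̲ < W`,
and then `J = νβIW / D > 0`. Conversely, when `D ≠ 0` the force of infection satisfies
`D (I + ξJ) = (ρ+μ) I`; this turns the first, second and fourth equilibrium equations into
identities, while the third, multiplied by `β(γ+μ)(ρ+μ) D`, becomes `AW² + BW + C = 0` once
`α + ω = αω` is used. Finally the third equation reads `ακ (1 - S - I - W - J) = W · (outflow ≥ 0)`,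
which gives `S + I + W + J ≤ 1`.
-/

namespace SIRWJS

variable {β ξ μ γ ρ κ ν α ω W S I J D : ℝ}

lemma mul_S_eq (hβ : β ≠ 0) (hρμ : ρ + μ ≠ 0)
    (hS : S = (γ + μ) / β - ν * ξ * (γ + μ) / (ρ + μ) * W) :
    β * (ρ + μ) * S = (γ + μ) * (ρ + μ - ν * β * ξ * W) := by
  rw [hS]; field_simp

lemma mul_I_eq (hβ : β ≠ 0) (hγμ : γ + μ ≠ 0) (hρμ : ρ + μ ≠ 0)
    (hI : I = μ * (1 / (γ + μ) - 1 / β) + (ω * κ / (γ + μ) + μ * ν * ξ / (ρ + μ)) * W) :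
    β * (γ + μ) * (ρ + μ) * I =
      β * (μ * ν * ξ * (γ + μ) + ω * κ * (ρ + μ)) * W - μ * (-β + γ + μ) * (ρ + μ) := by
  rw [hI]; field_simp; ring

lemma equilibrium_equations_iff_root (hβ : β ≠ 0) (hγμ : γ + μ ≠ 0) (hρμ : ρ + μ ≠ 0)
    (hD : D ≠ 0) (hαω : α + ω = α * ω)
    {η Q₀ Q₁ Q₂ A B C : ℝ}
    (hη : η = α + ω)
    (hQ₀ : Q₀ = α * κ * γ)
    (hQ₁ : Q₁ = ((γ + μ) * (η * κ + μ) + η * κ ^ 2) * (ρ + μ))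
    (hQ₂ : Q₂ = α * κ + ρ + μ)
    (hA : A = ν * β ^ 2 * (-ν * ξ ^ 2 * (γ + μ) * Q₀ + ξ * Q₁
      + (α * κ * (ρ + μ) - ν * ξ * μ * (γ + μ) - η * κ * (ρ + μ)) * Q₂))
    (hB : B = β * (ρ + μ) * ((ν * ξ * (γ + μ) - ν * ξ * (β - γ - μ)) * Q₀
      - Q₁ - ν * μ * (β - γ - μ) * Q₂))
    (hC : C = (β - γ - μ) * (ρ + μ) ^ 2 * Q₀)
    (hD_def : D = ρ + μ - ν * β * ξ * W)
    (hS : β * (ρ + μ) * S = (γ + μ) * D)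
    (hI : β * (γ + μ) * (ρ + μ) * I =
      β * (μ * ν * ξ * (γ + μ) + ω * κ * (ρ + μ)) * W - μ * (-β + γ + μ) * (ρ + μ))
    (hJ : D * J = ν * β * I * W) :
    (-β * (I + ξ * J) * S + ω * κ * W + μ * (1 - S) = 0 ∧
      β * (I + ξ * J) * S - (γ + μ) * I = 0 ∧
      α * κ * (1 - S - I - W - J) - ω * κ * W - ν * β * (I + ξ * J) * W - μ * W = 0 ∧
      ν * β * (I + ξ * J) * W - (μ + ρ) * J = 0) ↔ A * W ^ 2 + B * W + C = 0 := by
  have hforce : D * (I + ξ * J) = (ρ + μ) * I := by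
    linear_combination ξ * hJ + I * hD_def
  have eqn₂ : β * (I + ξ * J) * S - (γ + μ) * I = 0 := by
    refine (mul_eq_zero.1 ?_).resolve_left (mul_ne_zero hD hρμ)
    linear_combination ((ρ + μ) * β * S) * hforce + ((ρ + μ) * I) * hS
  have eqn₁ : -β * (I + ξ * J) * S + ω * κ * W + μ * (1 - S) = 0 := by
    refine (mul_eq_zero.1 ?_).resolve_left (mul_ne_zero hβ hρμ)
    linear_combination (-(β * (ρ + μ))) * eqn₂ - hI - μ * hS - μ * (γ + μ) * hD_def
  have eqn₄ : ν * β * (I + ξ * J) * W - (μ + ρ) * J = 0 := by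
    refine (mul_eq_zero.1 ?_).resolve_left hD
    linear_combination (ν * β * W) * hforce - (ρ + μ) * hJ
  have eqn₃ : (β * (γ + μ) * (ρ + μ) * D) *
      (α * κ * (1 - S - I - W - J) - ω * κ * W - ν * β * (I + ξ * J) * W - μ * W) =
      A * W ^ 2 + B * W + C := by
    subst hA hB hC hQ₀ hQ₁ hQ₂ hη hD_def
    linear_combination
      (-(α * κ) * (γ + μ) * (ρ + μ - ν * β * ξ * W)) * hS
      + (-(α * κ) * (ρ + μ - ν * β * ξ * W) - ν * β * (ρ + μ) * W - α * κ * ν * β * W) * hI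
      + (-(β * (γ + μ) * (ρ + μ)) * (ν * β * ξ * W + α * κ)) * hJ
      + (β * κ ^ 2 * W * (ρ + μ) * (ρ + μ - ν * β * ξ * W)) * hαω
  rw [← eqn₃, mul_eq_zero, or_iff_right (by simp [hβ, hγμ, hρμ, hD])]
  exact ⟨fun h => h.2.2.1, fun h => ⟨eqn₁, eqn₂, h, eqn₄⟩⟩

lemma add_le_one_of_W_balance (hακ : 0 < α * κ) (hW : 0 ≤ W)
    (hout : 0 ≤ ω * κ + ν * β * (I + ξ * J) + μ)
    (h : α * κ * (1 - S - I - W - J) - ω * κ * W - ν * β * (I + ξ * J) * W - μ * W = 0) :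
    S + I + W + J ≤ 1 := by
  have : 0 ≤ α * κ * (1 - S - I - W - J) := by nlinarith [mul_nonneg hout hW]
  linarith [nonneg_of_mul_nonneg_right this hακ]

end SIRWJS

/-- A positive root `W*` of the equilibrium quadratic yields, via the explicit
formulas for `S*`, `I*`, `J*`, a solution of the equilibrium equations of the
reduced SIRWJS system with all components positive (hence lying in the feasible
region `D`) if and only if `max {0, W̲} < W* < W̄`. -/
theorem sirwjs_equilibrium_feasibility_characterization
    (β ξ μ γ ρ κ ν α ω : ℝ)
    (hβ : 0 < β) (hξ : 0 < ξ) (hμ : 0 < μ) (hγ : 0 < γ) (hρ : 0 < ρ)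
    (hκ : 0 < κ) (hν : 0 < ν) (hα : 1 < α) (hω : 1 < ω)
    (hαω : α + ω = α * ω)
    (η Q₀ Q₁ Q₂ A B C : ℝ)
    (hη : η = α + ω)
    (hQ₀ : Q₀ = α * κ * γ)
    (hQ₁ : Q₁ = ((γ + μ) * (η * κ + μ) + η * κ ^ 2) * (ρ + μ))
    (hQ₂ : Q₂ = α * κ + ρ + μ)
    (hA : A = ν * β ^ 2 * (-ν * ξ ^ 2 * (γ + μ) * Q₀ + ξ * Q₁
      + (α * κ * (ρ + μ) - ν * ξ * μ * (γ + μ) - η * κ * (ρ + μ)) * Q₂))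
    (hB : B = β * (ρ + μ) * ((ν * ξ * (γ + μ) - ν * ξ * (β - γ - μ)) * Q₀
      - Q₁ - ν * μ * (β - γ - μ) * Q₂))
    (hC : C = (β - γ - μ) * (ρ + μ) ^ 2 * Q₀)
    (W : ℝ) (hW0 : 0 < W) (hroot : A * W ^ 2 + B * W + C = 0)
    (S I J Wlow Wup : ℝ)
    (hS : S = (γ + μ) / β - ν * ξ * (γ + μ) / (ρ + μ) * W)
    (hI : I = μ * (1 / (γ + μ) - 1 / β) + (ω * κ / (γ + μ) + μ * ν * ξ / (ρ + μ)) * W)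
    (hJ : J = ν * β * I * W / (ρ + μ - ν * β * ξ * W))
    (hWup : Wup = (ρ + μ) / (ν * β * ξ))
    (hWlow : Wlow = μ * (-β + γ + μ) * (ρ + μ)
      / (β * (μ * ν * ξ * (γ + μ) + ω * κ * (ρ + μ)))) :
    ((-β * (I + ξ * J) * S + ω * κ * W + μ * (1 - S) = 0 ∧
      β * (I + ξ * J) * S - (γ + μ) * I = 0 ∧
      α * κ * (1 - S - I - W - J) - ω * κ * W - ν * β * (I + ξ * J) * W - μ * W = 0 ∧
      ν * β * (I + ξ * J) * W - (μ + ρ) * J = 0) ∧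
      0 < S ∧ 0 < I ∧ 0 < J ∧ S + I + W + J ≤ 1)
    ↔ (max 0 Wlow < W ∧ W < Wup) := by
  have hα₀ : 0 < α := by linarith
  have hω₀ : 0 < ω := by linarith
  have hγμ : 0 < γ + μ := add_pos hγ hμ
  have hρμ : 0 < ρ + μ := add_pos hρ hμ
  have hS' := SIRWJS.mul_S_eq hβ.ne' hρμ.ne' hS
  have hI' := SIRWJS.mul_I_eq hβ.ne' hγμ.ne' hρμ.ne' hI
  have hD_pos : 0 < ρ + μ - ν * β * ξ * W ↔ W < Wup := by
    rw [sub_pos, hWup, lt_div_iff₀ (by positivity), mul_comm]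
  have hS_pos : 0 < S ↔ 0 < ρ + μ - ν * β * ξ * W := by
    rw [← mul_pos_iff_of_pos_left (by positivity : 0 < β * (ρ + μ)), hS',
      mul_pos_iff_of_pos_left hγμ]
  have hI_pos : 0 < I ↔ Wlow < W := by
    rw [← mul_pos_iff_of_pos_left (by positivity : 0 < β * (γ + μ) * (ρ + μ)), hI', sub_pos,
      hWlow, div_lt_iff₀' (by positivity)]
  constructor
  · rintro ⟨-, hS0, hI0, -, -⟩
    exact ⟨max_lt hW0 (hI_pos.1 hI0), hD_pos.1 (hS_pos.1 hS0)⟩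
  · rintro ⟨hmax, hWWup⟩
    have hD := hD_pos.2 hWWup
    have hI0 := hI_pos.2 ((le_max_right 0 Wlow).trans_lt hmax)
    have hJ0 : 0 < J := by rw [hJ]; positivity
    have hJ' : (ρ + μ - ν * β * ξ * W) * J = ν * β * I * W := by
      rw [hJ, mul_div_cancel₀ _ hD.ne']
    have heq := (SIRWJS.equilibrium_equations_iff_root hβ.ne' hγμ.ne' hρμ.ne' hD.ne' hαω
      hη hQ₀ hQ₁ hQ₂ hA hB hC rfl hS' hI' hJ').2 hroot
    exact ⟨heq, hS_pos.2 hD, hI0, hJ0,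
      SIRWJS.add_le_one_of_W_balance (by positivity) hW0.le (by positivity) heq.2.2.1⟩
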